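/- Let R : ℝ^N → ℝ be twice continuously differentiable and let π : ℝ^N → ℝ be a positive, twice continuously differentiable probability density. Define the drift f(α) = (β/2 · π(α)² · ∇R(α)) + π(α) · ∇π(α) and the diffusion coefficient σ(α) = π(α)·I_N. Then the Gibbs density p(α) = Z⁻¹ exp(β R(α)) (assuming the normalizing constant Z = ∫ exp(βR) is finite) satisfies the stationary Fokker–Planck equation (1/2)·Tr[∇²(σσᵀ p)](α) − div(f p)(α) = 0 for all α. -/

import Mathlib

/- The Gibbs density makes the probability flux `(1/2)∇(π² p) − f p` vanish identically:
since `∇p = β p ∇R`, we get `∂ᵢ(π² p) = (β π² ∂ᵢR + 2 π ∂ᵢπ) p = 2 fᵢ p`. A zero flux has zero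
divergence, which is exactly the stationary Fokker–Planck equation. -/

open MeasureTheory Real

/-- Partial derivative of `f : ℝ^N → ℝ` in the `i`-th coordinate direction. -/
noncomputable def pderiv' {N : ℕ} (i : Fin N) (f : (Fin N → ℝ) → ℝ) (x : Fin N → ℝ) : ℝ :=
  fderiv ℝ f x (Pi.single i 1)

theorem pderiv'_const_mul {N : ℕ} (i : Fin N) (c : ℝ) (g : (Fin N → ℝ) → ℝ)
    (x : Fin N → ℝ) : pderiv' i (fun y => c * g y) x = c * pderiv' i g x := by
  change fderiv ℝ (c • g) x _ = _
  rw [fderiv_const_smul_field]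
  rfl

theorem fderiv_sq_mul_const_mul_exp {E : Type*} [NormedAddCommGroup E] [NormedSpace ℝ E]
    {R d : E → ℝ} {x : E} (hR : DifferentiableAt ℝ R x) (hd : DifferentiableAt ℝ d x)
    (β c : ℝ) :
    fderiv ℝ (fun y => d y ^ 2 * (c * exp (β * R y))) x =
      (c * exp (β * R x)) • ((β * d x ^ 2) • fderiv ℝ R x + (2 * d x) • fderiv ℝ d x) := by
  have hsq : HasFDerivAt (fun y => d y ^ 2) ((2 * d x) • fderiv ℝ d x) x := by
    simpa using hd.hasFDerivAt.pow 2
  have hgibbs : HasFDerivAt (fun y => c * exp (β * R y))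
      ((c * exp (β * R x) * β) • fderiv ℝ R x) x := by
    simpa [smul_smul, mul_assoc] using ((hR.hasFDerivAt.const_mul β).exp).const_mul c
  refine (hsq.mul hgibbs).fderiv.trans ?_
  ext v
  simp only [add_apply, smul_apply, smul_eq_mul]
  ring

theorem stmt0_general {N : ℕ} (β : ℝ)
    (R dens : (Fin N → ℝ) → ℝ)
    (hR : ContDiff ℝ 2 R) (hdens : ContDiff ℝ 2 dens)
    (Z : ℝ)
    (p : (Fin N → ℝ) → ℝ) (hp : p = fun α => Z⁻¹ * Real.exp (β * R α))
    (f : Fin N → (Fin N → ℝ) → ℝ)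
    (hf : ∀ i α, f i α =
      β / 2 * (dens α) ^ 2 * pderiv' i R α + dens α * pderiv' i dens α) :
    ∀ α, (1 / 2) * (∑ i, pderiv' i (fun x => pderiv' i (fun y => (dens y) ^ 2 * p y) x) α)
        - (∑ i, pderiv' i (fun x => f i x * p x) α) = 0 := by
  intro α
  have hflux : ∀ i, (fun x => pderiv' i (fun y => dens y ^ 2 * p y) x) =
      fun x => 2 * (f i x * p x) := by
    intro i
    funext x
    subst hp
    rw [hf, pderiv', fderiv_sq_mul_const_mul_exp (hR.differentiable two_ne_zero x)
      (hdens.differentiable two_ne_zero x)]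
    simp only [smul_apply, add_apply, smul_eq_mul, pderiv']
    ring
  simp only [hflux, pderiv'_const_mul, ← Finset.mul_sum]
  ring

/-- The Gibbs density `p(α) = Z⁻¹ exp(β R(α))` satisfies the stationary Fokker–Planck
equation `(1/2)·Tr[∇²(σσᵀ p)](α) − div(f p)(α) = 0` for the generalized Langevin diffusion
with drift `f(α) = (β/2)π(α)²∇R(α) + π(α)∇π(α)` and diffusion coefficient `σ(α) = π(α)·I_N`. -/
theorem stmt0 {N : ℕ} (hN : 1 ≤ N) (β : ℝ) (hβ : 0 < β)
    (R dens : (Fin N → ℝ) → ℝ)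
    (hR : ContDiff ℝ 2 R) (hdens : ContDiff ℝ 2 dens)
    (hpos : ∀ x, 0 < dens x)
    (hprob : ∫ x, dens x = 1)
    (hZfin : Integrable (fun x => Real.exp (β * R x)))
    (Z : ℝ) (hZ : Z = ∫ x, Real.exp (β * R x))
    (p : (Fin N → ℝ) → ℝ) (hp : p = fun α => Z⁻¹ * Real.exp (β * R α))
    (f : Fin N → (Fin N → ℝ) → ℝ)
    (hf : ∀ i α, f i α =
      β / 2 * (dens α) ^ 2 * pderiv' i R α + dens α * pderiv' i dens α) :
    ∀ α, (1 / 2) * (∑ i, pderiv' i (fun x => pderiv' i (fun y => (dens y) ^ 2 * p y) x) α)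
        - (∑ i, pderiv' i (fun x => f i x * p x) α) = 0 :=
  stmt0_general β R dens hR hdens Z p hp f hf
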